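/- Let P, P' be Markov kernels with invariant probability measures π, π', and let f be bounded measurable. Let Λ'f denote a bounded solution of the Poisson equation Λ'f − P'(Λ'f) = f − π'(f), and suppose g := (P − P')(Λ'f) is bounded and Λ'g is a bounded solution of Λ'g − P'(Λ'g) = g − π'(g). Then π(f) − π'(f) = π'((P − P') Λ'f) + π((P − P') Λ'(P − P') Λ'f). -/

import Mathlib

/-!
Integrating the Poisson equation `Λh − P'Λh = h − c` against a `P`-invariant `π` and using
`π(PΛh) = π(Λh)` gives the first-order identity `π(h) − c = π((P − P')Λh)`. Applied to `f` with
`c = π'(f)` it gives `π(f) − π'(f) = π(g)`; applied to `g` with `c = π'(g)` it expands `π(g)`.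
-/

open MeasureTheory ProbabilityTheory

section KernelIntegrals

variable {X : Type*} [MeasurableSpace X]

lemma integral_comp_eq_integral_integral {Y : Type*} [MeasurableSpace Y] {μ : Measure X}
    [SFinite μ] {κ : Kernel X Y} [IsSFiniteKernel κ] {h : Y → ℝ} (hh : Integrable h (κ ∘ₘ μ)) :
    ∫ y, h y ∂(κ ∘ₘ μ) = ∫ x, ∫ y, h y ∂(κ x) ∂μ := by
  rw [Measure.comp_eq_comp_const_apply] at hh ⊢
  exact Kernel.integral_comp hh

lemma integrable_of_abs_le {μ : Measure X} [IsFiniteMeasure μ] {h : X → ℝ} (hm : Measurable h)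
    {C : ℝ} (hb : ∀ x, |h x| ≤ C) : Integrable h μ :=
  .of_bound hm.aestronglyMeasurable C (ae_of_all _ hb)

lemma abs_integral_kernel_le {κ : Kernel X X} [IsMarkovKernel κ] {h : X → ℝ} {C : ℝ}
    (hb : ∀ x, |h x| ≤ C) (x : X) : |∫ y, h y ∂(κ x)| ≤ C := by
  simpa using norm_integral_le_of_norm_le_const (μ := κ x)
    (ae_of_all _ fun y => (Real.norm_eq_abs _).le.trans (hb y))

lemma integrable_integral_kernel {μ : Measure X} [IsFiniteMeasure μ] {κ : Kernel X X}
    [IsMarkovKernel κ] {h : X → ℝ} (hm : Measurable h) {C : ℝ} (hb : ∀ x, |h x| ≤ C) :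
    Integrable (fun x => ∫ y, h y ∂(κ x)) μ :=
  integrable_of_abs_le (hm.stronglyMeasurable.integral_kernel).measurable
    (abs_integral_kernel_le hb)

lemma integral_integral_kernel_of_comp_eq {μ : Measure X} [IsFiniteMeasure μ]
    {κ : Kernel X X} [IsSFiniteKernel κ] (hinv : κ ∘ₘ μ = μ) {h : X → ℝ} (hm : Measurable h)
    {C : ℝ} (hb : ∀ x, |h x| ≤ C) :
    ∫ x, ∫ y, h y ∂(κ x) ∂μ = ∫ x, h x ∂μ := by
  have hint : Integrable h (κ ∘ₘ μ) := by
    rw [hinv]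
    exact integrable_of_abs_le hm hb
  rw [← integral_comp_eq_integral_integral hint, hinv]

theorem integral_sub_eq_integral_kernel_sub_of_poisson {P P' : Kernel X X} [IsMarkovKernel P]
    [IsMarkovKernel P'] {π : Measure X} [IsProbabilityMeasure π] (hinv : P ∘ₘ π = π)
    {h Λ : X → ℝ} {c : ℝ} (hΛm : Measurable Λ) {C : ℝ} (hΛb : ∀ x, |Λ x| ≤ C)
    (hpoisson : ∀ x, Λ x - ∫ y, Λ y ∂(P' x) = h x - c) :
    (∫ x, h x ∂π) - c = ∫ x, ((∫ y, Λ y ∂(P x)) - ∫ y, Λ y ∂(P' x)) ∂π := by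
  have hP'Λ : Integrable (fun x => ∫ y, Λ y ∂(P' x)) π := integrable_integral_kernel hΛm hΛb
  have hdiff : Integrable (fun x => Λ x - ∫ y, Λ y ∂(P' x)) π :=
    (integrable_of_abs_le hΛm hΛb).sub hP'Λ
  have hh : Integrable h π := by
    have hsub : Integrable (fun x => h x + -c) π := hdiff.congr (ae_of_all _ fun x => by
      simp only [hpoisson, sub_eq_add_neg])
    exact integrable_add_const_iff.mp hsub
  calc (∫ x, h x ∂π) - c = ∫ x, (h x - c) ∂π := by
        rw [integral_sub hh (integrable_const c)]; simp
    _ = ∫ x, (Λ x - ∫ y, Λ y ∂(P' x)) ∂π :=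
        integral_congr_ae (ae_of_all _ fun x => (hpoisson x).symm)
    _ = ∫ x, ((∫ y, Λ y ∂(P x)) - ∫ y, Λ y ∂(P' x)) ∂π := by
        rw [integral_sub (integrable_integral_kernel hΛm hΛb) hP'Λ,
          integral_integral_kernel_of_comp_eq hinv hΛm hΛb,
          integral_sub (integrable_of_abs_le hΛm hΛb) hP'Λ]

end KernelIntegrals

theorem stmt6_general {X : Type*} [MeasurableSpace X]
    (P P' : Kernel X X) [IsMarkovKernel P] [IsMarkovKernel P']
    (π π' : Measure X) [IsProbabilityMeasure π]
    (hinv : π.bind (fun x => P x) = π)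
    (f Λf g Λg : X → ℝ)
    (hΛfm : Measurable Λf) (hΛgm : Measurable Λg)
    (CΛf CΛg : ℝ)
    (hΛfb : ∀ x, |Λf x| ≤ CΛf) (hΛgb : ∀ x, |Λg x| ≤ CΛg)
    (hpoisson1 : ∀ x, Λf x - ∫ y, Λf y ∂(P' x) = f x - ∫ y, f y ∂π')
    (hgdef : ∀ x, g x = (∫ y, Λf y ∂(P x)) - ∫ y, Λf y ∂(P' x))
    (hpoisson2 : ∀ x, Λg x - ∫ y, Λg y ∂(P' x) = g x - ∫ y, g y ∂π') :
    (∫ x, f x ∂π) - ∫ x, f x ∂π' =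
      (∫ x, g x ∂π') +
        ∫ x, ((∫ y, Λg y ∂(P x)) - ∫ y, Λg y ∂(P' x)) ∂π := by
  have hfirst : (∫ x, f x ∂π) - ∫ x, f x ∂π' = ∫ x, g x ∂π := by
    rw [integral_sub_eq_integral_kernel_sub_of_poisson hinv hΛfm hΛfb hpoisson1]
    exact integral_congr_ae (ae_of_all _ fun x => (hgdef x).symm)
  have hsecond := integral_sub_eq_integral_kernel_sub_of_poisson hinv hΛgm hΛgb hpoisson2
  linarith

/-- Second-order linearization:
`π(f) − π'(f) = π'((P − P')Λ'f) + π((P − P')Λ'(P − P')Λ'f)`. -/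
theorem stmt6 {X : Type*} [MeasurableSpace X]
    (P P' : Kernel X X) [IsMarkovKernel P] [IsMarkovKernel P']
    (π π' : Measure X) [IsProbabilityMeasure π] [IsProbabilityMeasure π']
    (hinv : π.bind (fun x => P x) = π) (hinv' : π'.bind (fun x => P' x) = π')
    (f Λf g Λg : X → ℝ)
    (hfm : Measurable f) (hΛfm : Measurable Λf) (hgm : Measurable g) (hΛgm : Measurable Λg)
    (Cf CΛf Cg CΛg : ℝ)
    (hfb : ∀ x, |f x| ≤ Cf) (hΛfb : ∀ x, |Λf x| ≤ CΛf)
    (hgb : ∀ x, |g x| ≤ Cg) (hΛgb : ∀ x, |Λg x| ≤ CΛg)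
    (hpoisson1 : ∀ x, Λf x - ∫ y, Λf y ∂(P' x) = f x - ∫ y, f y ∂π')
    (hgdef : ∀ x, g x = (∫ y, Λf y ∂(P x)) - ∫ y, Λf y ∂(P' x))
    (hpoisson2 : ∀ x, Λg x - ∫ y, Λg y ∂(P' x) = g x - ∫ y, g y ∂π') :
    (∫ x, f x ∂π) - ∫ x, f x ∂π' =
      (∫ x, g x ∂π') +
        ∫ x, ((∫ y, Λg y ∂(P x)) - ∫ y, Λg y ∂(P' x)) ∂π :=
  stmt6_general P P' π π' hinv f Λf g Λg hΛfm hΛgm CΛf CΛg hΛfb hΛgb hpoisson1 hgdef hpoisson2
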